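/- In the ring R = k[x,y,z,u]/(x²+yz, xy−yu, xz, xu, y²), the ideal quotients ((z) : (z,u)) = (x,z), ((z,u) : (x,z,u)) = (x,y,z,u), and ((x,z,u) : (x,y,z,u)) = (x,y,z,u) hold. -/

import Mathlib

open MvPolynomial

set_option synthInstance.maxHeartbeats 1000000
set_option maxHeartbeats 1000000

noncomputable section

/-- The defining ideal `(x²+yz, xy−yu, xz, xu, y²)` of Conca's ring, with
`x = X 0`, `y = X 1`, `z = X 2`, `u = X 3`. -/
def concaIdeal (k : Type*) [Field k] : Ideal (MvPolynomial (Fin 4) k) :=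
  Ideal.span {X 0 ^ 2 + X 1 * X 2, X 0 * X 1 - X 1 * X 3, X 0 * X 2, X 0 * X 3, X 1 ^ 2}

/-- The ring `R = k[x,y,z,u]/(x²+yz, xy−yu, xz, xu, y²)`. -/
abbrev ConcaRing (k : Type*) [Field k] := MvPolynomial (Fin 4) k ⧸ concaIdeal k

/-- The residue classes of the variables `x, y, z, u` in `R`. -/
def cv (k : Type*) [Field k] (i : Fin 4) : ConcaRing k :=
  Ideal.Quotient.mk (concaIdeal k) (X i)

/-!
The inclusions `⊇` are checked on generators, using `x² = -yz`, `xy = yu`, `xu = y² = 0`.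

For `⊆`, an element `r` of a colon ideal is tested against a `k`-algebra map `φ : R → A` that
kills the smaller ideal and sends an element `t` of the larger one to some `s ≠ 0` annihilated by
every `φ xᵢ`: then `0 = φ (r t) = aug(r) s`, where `aug` is the augmentation `xᵢ ↦ 0`, so `r`
lies in `𝔪 = (x, y, z, u) = ker aug`. The dual-number points `x ↦ ε` and `y ↦ ε` give the last two
equalities. For the first one, `r u ∈ (z)` forces `r ∈ (x, y, z)` by looking at the monomials
`uⁿ`; writing `r = a y + h` with `h ∈ (x, z)`, a second test shows `a ∈ 𝔪`, hence `a y ∈ (x, z)`.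
-/

namespace MvPolynomial

variable {σ R : Type*} [CommSemiring R]

theorem mem_span_range_X_of_constantCoeff_eq_zero {f : MvPolynomial σ R}
    (hf : constantCoeff f = 0) : f ∈ Ideal.span (Set.range X) := by
  rw [← Set.image_univ, mem_ideal_span_X_image]
  intro m hm
  by_contra! h
  obtain rfl : m = 0 := Finsupp.ext fun i ↦ h i trivial
  exact mem_support_iff.mp hm (by rwa [← constantCoeff_eq])

theorem mem_span_X_image_of_mul_X_mem {s : Set σ} {i : σ} (hi : i ∉ s) {f : MvPolynomial σ R}
    (hf : f * X i ∈ Ideal.span (X '' s)) : f ∈ Ideal.span (X '' s) := by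
  rw [mem_ideal_span_X_image] at hf ⊢
  intro m hm
  obtain ⟨j, hj, hmj⟩ := hf (m + Finsupp.single i 1) (by simpa [coeff_mul_X] using hm)
  refine ⟨j, hj, ?_⟩
  rwa [Finsupp.add_apply, Finsupp.single_eq_of_ne (by rintro rfl; exact hi hj), add_zero] at hmj

theorem aeval_mul_eq_constantCoeff_smul {A : Type*} [CommSemiring A] [Algebra R A]
    (v : σ → A) {s : A} (hs : ∀ i, v i * s = 0) (f : MvPolynomial σ R) :
    aeval v f * s = constantCoeff f • s := by
  induction f using MvPolynomial.induction_on with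
  | C a => simp [Algebra.smul_def]
  | add f g hf hg => simp [add_mul, hf, hg, add_smul]
  | mul_X f i _ => simp [mul_assoc, hs]

end MvPolynomial

theorem DualNumber.eps_ne_zero {R : Type*} [Semiring R] [Nontrivial R] :
    (DualNumber.eps : DualNumber R) ≠ 0 :=
  fun h ↦ one_ne_zero (congrArg TrivSqZeroExt.snd h)

theorem Ideal.span_le_colon_span {R : Type*} [CommSemiring R] {I : Ideal R} {S T : Set R}
    (h : ∀ s ∈ S, ∀ t ∈ T, s * t ∈ I) : Ideal.span S ≤ I.colon (Ideal.span T) := by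
  rw [Ideal.colon_span, Ideal.span_le]
  exact fun s hs ↦ Submodule.mem_colon.mpr (h s hs)

namespace ConcaRing

variable {k : Type*} [Field k]

theorem cv_zero_mul_cv_zero : cv k 0 * cv k 0 = -(cv k 1 * cv k 2) := by
  rw [eq_neg_iff_add_eq_zero]
  exact Ideal.Quotient.eq_zero_iff_mem.mpr (Ideal.subset_span (by simp [sq]))

theorem cv_zero_mul_cv_one : cv k 0 * cv k 1 = cv k 1 * cv k 3 := by
  rw [← sub_eq_zero]
  exact Ideal.Quotient.eq_zero_iff_mem.mpr (Ideal.subset_span (by simp))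

theorem cv_zero_mul_cv_three : cv k 0 * cv k 3 = 0 :=
  Ideal.Quotient.eq_zero_iff_mem.mpr (Ideal.subset_span (by simp))

theorem cv_one_mul_cv_one : cv k 1 * cv k 1 = 0 :=
  Ideal.Quotient.eq_zero_iff_mem.mpr (Ideal.subset_span (by simp [sq]))

variable {A : Type*} [CommRing A] [Algebra k A]

def lift (v : Fin 4 → A) (h₁ : v 0 ^ 2 + v 1 * v 2 = 0) (h₂ : v 0 * v 1 = v 1 * v 3)
    (h₃ : v 0 * v 2 = 0) (h₄ : v 0 * v 3 = 0) (h₅ : v 1 ^ 2 = 0) : ConcaRing k →ₐ[k] A :=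
  Ideal.Quotient.liftₐ (concaIdeal k) (aeval v) fun p hp ↦ by
    refine (Ideal.span_le (I := RingHom.ker (aeval v))).mpr ?_ hp
    rintro _ (rfl | rfl | rfl | rfl | rfl) <;> simp [h₁, h₂, h₃, h₄, h₅]

theorem lift_cv (v : Fin 4 → A) (h₁ h₂ h₃ h₄ h₅) (i : Fin 4) :
    lift (k := k) v h₁ h₂ h₃ h₄ h₅ (cv k i) = v i :=
  aeval_X v i

theorem algHom_mk_eq_aeval (φ : ConcaRing k →ₐ[k] A) (f : MvPolynomial (Fin 4) k) :
    φ (Ideal.Quotient.mk _ f) = aeval (fun i ↦ φ (cv k i)) f := by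
  have : φ.comp (Ideal.Quotient.mkₐ k (concaIdeal k)) = aeval fun i ↦ φ (cv k i) :=
    MvPolynomial.algHom_ext fun i ↦ by simp [cv]
  exact DFunLike.congr_fun this f

def augmentation : ConcaRing k →ₐ[k] k :=
  lift 0 (by simp) (by simp) (by simp) (by simp) (by simp)

theorem augmentation_mk (f : MvPolynomial (Fin 4) k) :
    augmentation (Ideal.Quotient.mk _ f) = constantCoeff f := by
  simp [algHom_mk_eq_aeval, augmentation, lift_cv]

theorem range_cv : Set.range (cv k) = {cv k 0, cv k 1, cv k 2, cv k 3} := by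
  ext
  simp [Fin.exists_fin_succ, eq_comm]

theorem mem_span_cv_of_augmentation_eq_zero {r : ConcaRing k} (hr : augmentation r = 0) :
    r ∈ Ideal.span {cv k 0, cv k 1, cv k 2, cv k 3} := by
  obtain ⟨f, rfl⟩ := Ideal.Quotient.mk_surjective r
  rw [augmentation_mk] at hr
  rw [← range_cv, show cv k = Ideal.Quotient.mk _ ∘ X from rfl, Set.range_comp,
    ← Ideal.map_span]
  exact Ideal.mem_map_of_mem _ (mem_span_range_X_of_constantCoeff_eq_zero hr)

theorem algHom_mul_eq_augmentation_smul (φ : ConcaRing k →ₐ[k] A) {s : A}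
    (hs : ∀ i, φ (cv k i) * s = 0) (r : ConcaRing k) : φ r * s = augmentation r • s := by
  obtain ⟨f, rfl⟩ := Ideal.Quotient.mk_surjective r
  rw [algHom_mk_eq_aeval, augmentation_mk, aeval_mul_eq_constantCoeff_smul _ hs]

theorem mem_span_cv_of_mul_mem (φ : ConcaRing k →ₐ[k] A) {J : Ideal (ConcaRing k)}
    (hJ : J ≤ RingHom.ker φ) {t : ConcaRing k} (ht : ∀ i, φ (cv k i) * φ t = 0) (ht₀ : φ t ≠ 0)
    {r : ConcaRing k} (hr : r * t ∈ J) : r ∈ Ideal.span {cv k 0, cv k 1, cv k 2, cv k 3} := by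
  have : augmentation r • φ t = 0 := by
    rw [← algHom_mul_eq_augmentation_smul φ ht, ← map_mul]
    exact hJ hr
  exact mem_span_cv_of_augmentation_eq_zero ((smul_eq_zero_iff_left ht₀).mp this)

theorem mem_span_cv_image_of_mul_mem {s : Set (Fin 4)} (hs : concaIdeal k ≤ Ideal.span (X '' s))
    {i : Fin 4} (hi : i ∉ s) {r : ConcaRing k} (hr : r * cv k i ∈ Ideal.span (cv k '' s)) :
    r ∈ Ideal.span (cv k '' s) := by
  obtain ⟨f, rfl⟩ := Ideal.Quotient.mk_surjective r
  have hspan : Ideal.span (cv k '' s) = (Ideal.span (X '' s)).map (Ideal.Quotient.mk _) := by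
    rw [Ideal.map_span, Set.image_image]
    rfl
  change Ideal.Quotient.mk _ (f * X i) ∈ _ at hr
  rw [hspan, Ideal.mem_quotient_iff_mem_sup, sup_eq_left.mpr hs] at hr ⊢
  exact mem_span_X_image_of_mul_X_mem hi hr

theorem span_cv_zero_two_le_colon :
    Ideal.span {cv k 0, cv k 2} ≤ (Ideal.span {cv k 2}).colon (Ideal.span {cv k 2, cv k 3}) := by
  refine Ideal.span_le_colon_span ?_
  rintro _ (rfl | rfl) _ (rfl | rfl)
  · exact Ideal.mul_mem_left _ _ (Ideal.mem_span_singleton_self _)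
  · rw [cv_zero_mul_cv_three]
    exact zero_mem _
  · exact Ideal.mul_mem_left _ _ (Ideal.mem_span_singleton_self _)
  · exact Ideal.mul_mem_right _ _ (Ideal.mem_span_singleton_self _)

theorem span_cv_le_colon_span_cv_zero_two :
    Ideal.span {cv k 0, cv k 1, cv k 2, cv k 3} ≤
      (Ideal.span {cv k 0, cv k 2}).colon (Ideal.span {cv k 1}) := by
  refine Ideal.span_le_colon_span ?_
  rintro _ (rfl | rfl | rfl | rfl) _ rfl
  · exact Ideal.mul_mem_right _ _ (Ideal.subset_span (by simp))
  · rw [cv_one_mul_cv_one]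
    exact zero_mem _
  · exact Ideal.mul_mem_right _ _ (Ideal.subset_span (by simp))
  · rw [mul_comm, ← cv_zero_mul_cv_one]
    exact Ideal.mul_mem_right _ _ (Ideal.subset_span (by simp))

theorem span_cv_le_colon_span_cv_two_three :
    Ideal.span {cv k 0, cv k 1, cv k 2, cv k 3} ≤
      (Ideal.span {cv k 2, cv k 3}).colon (Ideal.span {cv k 0, cv k 2, cv k 3}) := by
  refine Ideal.span_le_colon_span ?_
  rintro _ hs _ (rfl | ht)
  · rcases hs with rfl | rfl | rfl | rfl
    · rw [cv_zero_mul_cv_zero]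
      exact neg_mem (Ideal.mul_mem_left _ _ (Ideal.subset_span (by simp)))
    · rw [mul_comm, cv_zero_mul_cv_one]
      exact Ideal.mul_mem_left _ _ (Ideal.subset_span (by simp))
    · exact Ideal.mul_mem_right _ _ (Ideal.subset_span (by simp))
    · exact Ideal.mul_mem_right _ _ (Ideal.subset_span (by simp))
  · exact Ideal.mul_mem_left _ _ (Ideal.subset_span ht)

theorem span_cv_le_colon_span_cv_zero_two_three :
    Ideal.span {cv k 0, cv k 1, cv k 2, cv k 3} ≤
      (Ideal.span {cv k 0, cv k 2, cv k 3}).colon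
        (Ideal.span {cv k 0, cv k 1, cv k 2, cv k 3}) := by
  refine Ideal.span_le_colon_span ?_
  rintro _ hs _ (rfl | rfl | ht)
  · exact Ideal.mul_mem_left _ _ (Ideal.subset_span (by simp))
  · rcases hs with rfl | rfl | rfl | rfl
    · exact Ideal.mul_mem_right _ _ (Ideal.subset_span (by simp))
    · rw [cv_one_mul_cv_one]
      exact zero_mem _
    · exact Ideal.mul_mem_right _ _ (Ideal.subset_span (by simp))
    · exact Ideal.mul_mem_right _ _ (Ideal.subset_span (by simp))
  · exact Ideal.mul_mem_left _ _ (Ideal.subset_span (Set.mem_insert_of_mem _ ht))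

theorem concaIdeal_le_span_X : concaIdeal k ≤ Ideal.span (X '' {0, 1, 2}) := by
  have hX : ∀ i ∈ ({0, 1, 2} : Set (Fin 4)), (X i : MvPolynomial (Fin 4) k) ∈
      Ideal.span (X '' {0, 1, 2}) :=
    fun i hi ↦ Ideal.subset_span (Set.mem_image_of_mem _ hi)
  refine Ideal.span_le.mpr ?_
  rintro _ (rfl | rfl | rfl | rfl | rfl)
  · exact add_mem (Ideal.pow_mem_of_mem _ (hX 0 (by simp)) _ two_pos)
      (Ideal.mul_mem_right _ _ (hX 1 (by simp)))
  · exact sub_mem (Ideal.mul_mem_right _ _ (hX 0 (by simp)))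
      (Ideal.mul_mem_right _ _ (hX 1 (by simp)))
  · exact Ideal.mul_mem_right _ _ (hX 0 (by simp))
  · exact Ideal.mul_mem_right _ _ (hX 0 (by simp))
  · exact Ideal.pow_mem_of_mem _ (hX 1 (by simp)) _ two_pos

theorem mem_span_cv_zero_one_two_of_mul_cv_three_mem {r : ConcaRing k}
    (hr : r * cv k 3 ∈ Ideal.span {cv k 2}) : r ∈ Ideal.span {cv k 0, cv k 1, cv k 2} := by
  have := mem_span_cv_image_of_mul_mem concaIdeal_le_span_X (i := 3) (by decide)
    (Ideal.span_mono (by simp [Set.image_insert_eq]) hr)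
  simpa [Set.image_insert_eq] using this

/-- Tested against the point `x = u = t`, `y = e` of `k[e, t]/(e², t²)`, where `yu ↦ et` is
killed by the maximal ideal. -/
theorem mem_span_cv_of_mul_cv_one_mul_cv_three_mem {a : ConcaRing k}
    (ha : a * (cv k 1 * cv k 3) ∈ Ideal.span {cv k 2}) :
    a ∈ Ideal.span {cv k 0, cv k 1, cv k 2, cv k 3} := by
  let t : DualNumber (DualNumber k) := DualNumber.eps
  let e : DualNumber (DualNumber k) := algebraMap (DualNumber k) _ DualNumber.eps
  have ht : t ^ 2 = 0 := DualNumber.eps_pow_two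
  have he : e ^ 2 = 0 := by rw [← map_pow, DualNumber.eps_pow_two, map_zero]
  let φ := lift (k := k) ![t, e, 0, t] (by simp [ht]) (mul_comm t e) (by simp)
    (by simp [← sq, ht]) (by simp [he])
  have hφ : ∀ i, φ (cv k i) = ![t, e, 0, t] i := lift_cv _ _ _ _ _ _
  refine mem_span_cv_of_mul_mem (A := DualNumber (DualNumber k)) φ ?_ ?_ ?_ ha
  · simp [Ideal.span_le, hφ]
  · intro i
    fin_cases i <;> simp [hφ] <;> first | linear_combination e * ht | linear_combination t * he
  · simp only [map_mul, hφ]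
    exact fun h ↦ DualNumber.eps_ne_zero (by
      simpa [e, t, DualNumber.snd_mul, TrivSqZeroExt.algebraMap_eq_inl] using
        congrArg TrivSqZeroExt.snd h)

theorem colon_span_cv_two_le :
    (Ideal.span {cv k 2}).colon (Ideal.span {cv k 2, cv k 3}) ≤ Ideal.span {cv k 0, cv k 2} := by
  intro r hr
  have hru : r * cv k 3 ∈ Ideal.span {cv k 2} :=
    Submodule.mem_colon.mp hr _ (Ideal.subset_span (by simp))
  have hxyz := mem_span_cv_zero_one_two_of_mul_cv_three_mem hru
  rw [Set.insert_comm] at hxyz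
  obtain ⟨a, h, hh, rfl⟩ := Ideal.mem_span_insert.mp hxyz
  have hhu : h * cv k 3 ∈ Ideal.span {cv k 2} :=
    Submodule.mem_colon.mp (span_cv_zero_two_le_colon hh) _ (Ideal.subset_span (by simp))
  have ha : a ∈ Ideal.span {cv k 0, cv k 1, cv k 2, cv k 3} :=
    mem_span_cv_of_mul_cv_one_mul_cv_three_mem <| by
      simpa [add_mul, mul_assoc] using sub_mem hru hhu
  exact add_mem (Submodule.mem_colon.mp (span_cv_le_colon_span_cv_zero_two ha) _
    (Ideal.mem_span_singleton_self _)) hh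

open DualNumber in
def evalSingleEps (i : Fin 4) : ConcaRing k →ₐ[k] DualNumber k :=
  lift (Pi.single i ε) (by fin_cases i <;> simp [eps_pow_two]) (by fin_cases i <;> simp)
    (by fin_cases i <;> simp) (by fin_cases i <;> simp) (by fin_cases i <;> simp [eps_pow_two])

theorem evalSingleEps_cv (i j : Fin 4) :
    evalSingleEps i (cv k j) = Pi.single (M := fun _ ↦ DualNumber k) i DualNumber.eps j :=
  lift_cv _ _ _ _ _ _ j

theorem colon_le_of_le_ker_evalSingleEps {I J : Ideal (ConcaRing k)} (i : Fin 4)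
    (hI : I ≤ RingHom.ker (evalSingleEps i)) (hJ : cv k i ∈ J) :
    I.colon J ≤ Ideal.span {cv k 0, cv k 1, cv k 2, cv k 3} := by
  intro r hr
  refine mem_span_cv_of_mul_mem (A := DualNumber k) _ hI (fun j ↦ ?_) ?_
    (Submodule.mem_colon.mp hr _ hJ)
  · rcases eq_or_ne j i with rfl | hj
    · simp [evalSingleEps_cv, DualNumber.eps_mul_eps]
    · simp [evalSingleEps_cv, hj]
  · simpa [evalSingleEps_cv] using DualNumber.eps_ne_zero

theorem colon_span_cv_two_three_le :
    (Ideal.span {cv k 2, cv k 3}).colon (Ideal.span {cv k 0, cv k 2, cv k 3}) ≤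
      Ideal.span {cv k 0, cv k 1, cv k 2, cv k 3} :=
  colon_le_of_le_ker_evalSingleEps 0
    (by simp [Ideal.span_le, Set.insert_subset_iff, evalSingleEps_cv])
    (Ideal.subset_span (by simp))

theorem colon_span_cv_zero_two_three_le :
    (Ideal.span {cv k 0, cv k 2, cv k 3}).colon
        (Ideal.span {cv k 0, cv k 1, cv k 2, cv k 3}) ≤
      Ideal.span {cv k 0, cv k 1, cv k 2, cv k 3} :=
  colon_le_of_le_ker_evalSingleEps 1
    (by simp [Ideal.span_le, Set.insert_subset_iff, evalSingleEps_cv])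
    (Ideal.subset_span (by simp))

end ConcaRing

theorem stmt_4 (k : Type*) [Field k] :
    Submodule.colon (Ideal.span {cv k 2}) (Ideal.span {cv k 2, cv k 3}) =
      Ideal.span {cv k 0, cv k 2} ∧
    Submodule.colon (Ideal.span {cv k 2, cv k 3}) (Ideal.span {cv k 0, cv k 2, cv k 3}) =
      Ideal.span {cv k 0, cv k 1, cv k 2, cv k 3} ∧
    Submodule.colon (Ideal.span {cv k 0, cv k 2, cv k 3})
        (Ideal.span {cv k 0, cv k 1, cv k 2, cv k 3}) =
      Ideal.span {cv k 0, cv k 1, cv k 2, cv k 3} :=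
  ⟨le_antisymm ConcaRing.colon_span_cv_two_le ConcaRing.span_cv_zero_two_le_colon,
    le_antisymm ConcaRing.colon_span_cv_two_three_le
      ConcaRing.span_cv_le_colon_span_cv_two_three,
    le_antisymm ConcaRing.colon_span_cv_zero_two_three_le
      ConcaRing.span_cv_le_colon_span_cv_zero_two_three⟩
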